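/- For bounded operators X, Y on a complex Hilbert space H, the numerical radius of [[O, X],[Y, O]] on H ⊕ H equals (1/2)·sup over real θ of ‖e^{iθ}X + e^{-iθ}Y*‖. -/

import Mathlib

/-!
Write `T = [[0, X], [Y, 0]]` and `Z θ = e^{iθ} X + e^{-iθ} Y*`. For `u, v ∈ H` put
`a = ⟪X v, u⟫` and `b = ⟪Y u, v⟫`; then `⟪T (u, v), (u, v)⟫ = a + b` and
`⟪Z θ v, u⟫ = e^{-iθ} a + e^{iθ} conj b`, and `sup_θ |e^{-iθ} a + e^{iθ} b| = |a| + |b|`.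
Hence `|⟪T x, x⟫| ≤ |a| + |b| ≤ ‖Z θ‖ ‖u‖ ‖v‖ ≤ ‖Z θ‖ ‖x‖² / 2` for a suitable `θ`.
Conversely, for unit `u, v`, the vector `x = (u, e^{iφ} v)` with the right phase has `‖x‖² = 2`
and `|⟪Z θ v, u⟫| ≤ |a| + |b| = |⟪T x, x⟫| ≤ 2 w(T)`.
-/

open scoped InnerProductSpace
open ContinuousLinearMap
noncomputable section
set_option synthInstance.maxHeartbeats 1000000
set_option maxHeartbeats 1000000

variable {H : Type*} [NormedAddCommGroup H] [InnerProductSpace ℂ H] [CompleteSpace H]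

/-- The numerical radius of a bounded operator. -/
noncomputable def numRadius (T : H →L[ℂ] H) : ℝ :=
  sSup {r : ℝ | ∃ x : H, ‖x‖ = 1 ∧ r = ‖(⟪T x, x⟫_ℂ)‖}

/-- The 2×2 block operator [[X, Y],[Z, W]] on H ⊕ H (ℓ² direct sum). -/
noncomputable def blockOp (X Y Z W : H →L[ℂ] H) :
    WithLp 2 (H × H) →L[ℂ] WithLp 2 (H × H) :=
  ((WithLp.prodContinuousLinearEquiv 2 ℂ H H).symm.toContinuousLinearMap) ∘L
    ((X ∘L ContinuousLinearMap.fst ℂ H H + Y ∘L ContinuousLinearMap.snd ℂ H H).prod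
      (Z ∘L ContinuousLinearMap.fst ℂ H H + W ∘L ContinuousLinearMap.snd ℂ H H)) ∘L
    ((WithLp.prodContinuousLinearEquiv 2 ℂ H H).toContinuousLinearMap)

open scoped ComplexConjugate

namespace Complex

theorem isGreatest_norm_exp_neg_mul_add_exp_mul (a b : ℂ) :
    IsGreatest (Set.range fun θ : ℝ => ‖exp (-(θ * I)) * a + exp (θ * I) * b‖) (‖a‖ + ‖b‖) := by
  refine ⟨?_, ?_⟩
  · obtain ⟨α, hα⟩ : ∃ α : ℝ, ‖a‖ * exp (α * I) = a := ⟨_, norm_mul_exp_arg_mul_I a⟩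
    obtain ⟨β, hβ⟩ : ∃ β : ℝ, ‖b‖ * exp (β * I) = b := ⟨_, norm_mul_exp_arg_mul_I b⟩
    refine ⟨(α - β) / 2, ?_⟩
    -- both summands point in the direction `exp ((α + β) / 2 * I)`
    have h : exp (-(↑((α - β) / 2) * I)) * a + exp (↑((α - β) / 2) * I) * b
        = ↑(‖a‖ + ‖b‖) * exp (↑((α + β) / 2) * I) := by
      conv_lhs => rw [← hα, ← hβ]
      rw [mul_left_comm, ← exp_add, mul_left_comm, ← exp_add]
      push_cast
      ring_nf
    simp only [h, norm_mul, norm_exp_ofReal_mul_I, mul_one, norm_real]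
    exact Real.norm_of_nonneg (by positivity)
  · rintro _ ⟨θ, rfl⟩
    refine (norm_add_le _ _).trans_eq ?_
    simp [norm_exp]

end Complex

section

variable {𝕜 E F : Type*} [RCLike 𝕜] [NormedAddCommGroup E] [InnerProductSpace 𝕜 E]
  [NormedAddCommGroup F] [InnerProductSpace 𝕜 F]

theorem norm_le_of_forall_unit_norm_inner_le {x : E} {C : ℝ} (hC : 0 ≤ C)
    (h : ∀ u : E, ‖u‖ = 1 → ‖⟪x, u⟫_𝕜‖ ≤ C) : ‖x‖ ≤ C := by
  rw [← innerSL_apply_norm 𝕜 x]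
  exact opNorm_le_of_unit_norm hC h

theorem ContinuousLinearMap.opNorm_le_of_unit_norm_inner_le {T : E →L[𝕜] F} {C : ℝ} (hC : 0 ≤ C)
    (h : ∀ u v, ‖u‖ = 1 → ‖v‖ = 1 → ‖⟪T v, u⟫_𝕜‖ ≤ C) : ‖T‖ ≤ C :=
  opNorm_le_of_unit_norm hC fun v hv =>
    norm_le_of_forall_unit_norm_inner_le hC fun u hu => h u v hu hv

end

section NumRadius

variable {E : Type*} [NormedAddCommGroup E] [InnerProductSpace ℂ E] (T : E →L[ℂ] E)

theorem numRadius_bddAbove :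
    BddAbove {r : ℝ | ∃ x : E, ‖x‖ = 1 ∧ r = ‖(⟪T x, x⟫_ℂ)‖} := by
  refine ⟨‖T‖, ?_⟩
  rintro r ⟨x, hx, rfl⟩
  calc ‖⟪T x, x⟫_ℂ‖ ≤ ‖T x‖ * ‖x‖ := norm_inner_le_norm _ _
    _ ≤ ‖T‖ * ‖x‖ * ‖x‖ := by gcongr; exact T.le_opNorm x
    _ = ‖T‖ := by rw [hx, mul_one, mul_one]

theorem norm_inner_self_le_numRadius {x : E} (hx : ‖x‖ = 1) : ‖⟪T x, x⟫_ℂ‖ ≤ numRadius T :=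
  le_csSup (numRadius_bddAbove T) ⟨x, hx, rfl⟩

theorem norm_inner_self_le_numRadius_mul_sq (x : E) : ‖⟪T x, x⟫_ℂ‖ ≤ numRadius T * ‖x‖ ^ 2 := by
  rcases eq_or_ne x 0 with rfl | hx
  · simp
  have hx' : ‖x‖ ≠ 0 := norm_ne_zero_iff.mpr hx
  have hunit : ‖((‖x‖⁻¹ : ℝ) : ℂ) • x‖ = 1 := by
    rw [norm_smul, Complex.norm_real, Real.norm_of_nonneg (by positivity), inv_mul_cancel₀ hx']
  have h := norm_inner_self_le_numRadius T hunit
  rw [map_smul, inner_smul_left, inner_smul_right, Complex.conj_ofReal, ← mul_assoc, norm_mul,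
    ← Complex.ofReal_mul, Complex.norm_real, Real.norm_of_nonneg (by positivity)] at h
  calc ‖⟪T x, x⟫_ℂ‖ = ‖x‖⁻¹ * ‖x‖⁻¹ * ‖⟪T x, x⟫_ℂ‖ * ‖x‖ ^ 2 := by field_simp
    _ ≤ numRadius T * ‖x‖ ^ 2 := by gcongr

theorem numRadius_nonneg : 0 ≤ numRadius T :=
  Real.sSup_nonneg (by rintro _ ⟨x, -, rfl⟩; exact norm_nonneg _)

theorem numRadius_le {C : ℝ} (hC : 0 ≤ C) (h : ∀ x : E, ‖x‖ = 1 → ‖⟪T x, x⟫_ℂ‖ ≤ C) :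
    numRadius T ≤ C :=
  Real.sSup_le (by rintro r ⟨x, hx, rfl⟩; exact h x hx) hC

theorem inner_blockOp_offDiag_self (X Y : E →L[ℂ] E) (x : WithLp 2 (E × E)) :
    ⟪blockOp 0 X Y 0 x, x⟫_ℂ = ⟪X x.snd, x.fst⟫_ℂ + ⟪Y x.fst, x.snd⟫_ℂ := by
  simp [blockOp]

end NumRadius

theorem inner_expSmul_add_adjoint_apply (X Y : H →L[ℂ] H) (θ : ℝ) (u v : H) :
    ⟪(Complex.exp (θ * Complex.I) • X + Complex.exp (-(θ * Complex.I)) • adjoint Y) v, u⟫_ℂ =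
      Complex.exp (-(θ * Complex.I)) * ⟪X v, u⟫_ℂ +
        Complex.exp (θ * Complex.I) * conj ⟪Y u, v⟫_ℂ := by
  simp [adjoint_inner_left, ← Complex.exp_conj]
  ring

theorem exists_norm_inner_blockOp_offDiag_self_le (X Y : H →L[ℂ] H) (x : WithLp 2 (H × H)) :
    ∃ θ : ℝ, ‖⟪blockOp 0 X Y 0 x, x⟫_ℂ‖ ≤
      ‖Complex.exp (θ * Complex.I) • X + Complex.exp (-(θ * Complex.I)) • adjoint Y‖ *
        ‖x‖ ^ 2 / 2 := by
  set u := x.fst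
  set v := x.snd
  obtain ⟨θ, hθ⟩ :=
    (Complex.isGreatest_norm_exp_neg_mul_add_exp_mul ⟪X v, u⟫_ℂ (conj ⟪Y u, v⟫_ℂ)).1
  refine ⟨θ, ?_⟩
  set Z := Complex.exp (θ * Complex.I) • X + Complex.exp (-(θ * Complex.I)) • adjoint Y
  calc ‖⟪blockOp 0 X Y 0 x, x⟫_ℂ‖ ≤ ‖⟪X v, u⟫_ℂ‖ + ‖conj ⟪Y u, v⟫_ℂ‖ := by
        rw [inner_blockOp_offDiag_self, RCLike.norm_conj]
        exact norm_add_le _ _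
    _ = ‖⟪Z v, u⟫_ℂ‖ := by rw [inner_expSmul_add_adjoint_apply, ← hθ]
    _ ≤ ‖Z‖ * ‖v‖ * ‖u‖ := (norm_inner_le_norm _ _).trans (by gcongr; exact Z.le_opNorm v)
    _ ≤ ‖Z‖ * ‖x‖ ^ 2 / 2 := by
        rw [WithLp.prod_norm_sq_eq_of_L2, mul_assoc, mul_div_assoc]
        gcongr
        nlinarith [two_mul_le_add_sq ‖v‖ ‖u‖]

theorem norm_expSmul_add_adjoint_le_two_mul_numRadius (X Y : H →L[ℂ] H) (θ : ℝ) :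
    ‖Complex.exp (θ * Complex.I) • X + Complex.exp (-(θ * Complex.I)) • adjoint Y‖ ≤
      2 * numRadius (blockOp 0 X Y 0) := by
  refine opNorm_le_of_unit_norm_inner_le (mul_nonneg zero_le_two (numRadius_nonneg _))
    fun u v hu hv => ?_
  set a := ⟪X v, u⟫_ℂ
  set b := ⟪Y u, v⟫_ℂ
  obtain ⟨φ, hφ⟩ := (Complex.isGreatest_norm_exp_neg_mul_add_exp_mul a b).1
  set x : WithLp 2 (H × H) := WithLp.toLp 2 (u, Complex.exp (φ * Complex.I) • v)
  have hx : ‖x‖ ^ 2 = 2 := by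
    rw [WithLp.prod_norm_sq_eq_of_L2]
    simp [x, norm_smul, hu, hv]
    norm_num
  have hTx : ⟪blockOp 0 X Y 0 x, x⟫_ℂ =
      Complex.exp (-(φ * Complex.I)) * a + Complex.exp (φ * Complex.I) * b := by
    rw [inner_blockOp_offDiag_self]
    simp [x, ← Complex.exp_conj, a, b, mul_comm]
  calc ‖⟪(Complex.exp (θ * Complex.I) • X + Complex.exp (-(θ * Complex.I)) • adjoint Y) v, u⟫_ℂ‖
        ≤ ‖a‖ + ‖conj b‖ := by
          rw [inner_expSmul_add_adjoint_apply]
          exact (Complex.isGreatest_norm_exp_neg_mul_add_exp_mul a (conj b)).2 ⟨θ, rfl⟩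
    _ = ‖⟪blockOp 0 X Y 0 x, x⟫_ℂ‖ := by rw [RCLike.norm_conj, hTx, ← hφ]
    _ ≤ numRadius (blockOp 0 X Y 0) * ‖x‖ ^ 2 := norm_inner_self_le_numRadius_mul_sq _ x
    _ = 2 * numRadius (blockOp 0 X Y 0) := by rw [hx, mul_comm]

theorem numRadius_offdiag_sup (X Y : H →L[ℂ] H) :
    numRadius (blockOp 0 X Y 0) =
      (1 / 2) * sSup {c : ℝ | ∃ θ : ℝ,
        c = ‖Complex.exp (θ * Complex.I) • X +
              Complex.exp (-(θ * Complex.I)) • adjoint Y‖} := by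
  set S := {c : ℝ | ∃ θ : ℝ,
    c = ‖Complex.exp (θ * Complex.I) • X + Complex.exp (-(θ * Complex.I)) • adjoint Y‖}
  have hS_le : ∀ c ∈ S, c ≤ 2 * numRadius (blockOp 0 X Y 0) := by
    rintro _ ⟨θ, rfl⟩
    exact norm_expSmul_add_adjoint_le_two_mul_numRadius X Y θ
  have hS_nonneg : 0 ≤ sSup S := Real.sSup_nonneg (by rintro _ ⟨θ, rfl⟩; positivity)
  have hsSup_le : sSup S ≤ 2 * numRadius (blockOp 0 X Y 0) :=
    Real.sSup_le hS_le (mul_nonneg zero_le_two (numRadius_nonneg _))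
  refine le_antisymm (numRadius_le _ (by positivity) fun x hx => ?_) (by linarith)
  obtain ⟨θ, hθ⟩ := exists_norm_inner_blockOp_offDiag_self_le X Y x
  calc ‖⟪blockOp 0 X Y 0 x, x⟫_ℂ‖
      ≤ ‖Complex.exp (θ * Complex.I) • X + Complex.exp (-(θ * Complex.I)) • adjoint Y‖ / 2 := by
        simpa [hx] using hθ
    _ ≤ 1 / 2 * sSup S := by
        rw [div_eq_inv_mul, one_div]
        gcongr
        exact le_csSup ⟨_, hS_le⟩ ⟨θ, rfl⟩
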